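/- On the cylinder ℤ × (ℤ/(2n+1)ℤ) of odd width, for any configuration of two-sided mirrors in the Lorentz mirror model, there exists an infinite (unbounded) light trajectory. -/

import Mathlib

/-- A mirror state at a site: `none` = no mirror, `some true` = NW mirror,
`some false` = NE mirror. -/
abbrev Mirror := Option Bool

/-- The reflection rule for a light ray travelling in direction `d`. -/
def reflect : Mirror → ℤ × ℤ → ℤ × ℤ
  | none, d => d
  | some true, d => (d.2, d.1)
  | some false, d => (-d.2, -d.1)

/-- One step of the light dynamics on the cylinder `ℤ × (ℤ/wℤ)`. -/
def stepC (w : ℕ) (cfg : ℤ × ZMod w → Mirror)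
    (s : (ℤ × ZMod w) × (ℤ × ℤ)) : (ℤ × ZMod w) × (ℤ × ℤ) :=
  let v : ℤ × ZMod w := (s.1.1 + s.2.1, s.1.2 + (s.2.2 : ZMod w))
  (v, reflect (cfg v) s.2)

/-!
Light rays can be run backwards: the reversal `R` (step onto the next vertex and turn around) is
an involution with `step ∘ R ∘ step = R`. If every trajectory were bounded, every state would be
periodic, so the ray crossing the cut between the columns `x = 0` and `x = 1` rightwards at
height `y` comes back to the cut, and it first does so leftwards at some height `g y`.
Reversibility makes `g` an involution. A fixed point of `g` would give a loop `step^m a = R a`;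
halving it yields a state `b` with `R b = b` or `step b = R b`, impossible since reversal flips the
direction and no mirror sends a ray straight back. So the `w` heights are paired off and `w` is
even.
-/

open Function

section Reversible

variable {α : Type*} {f R : α → α}

theorem Function.Injective.mem_periodicPts_of_finite_orbit (hf : Injective f) {x : α}
    (hfin : (Set.range fun n => f^[n] x).Finite) : x ∈ periodicPts f := by
  obtain ⟨m, n, hne, heq⟩ : ∃ m n, m ≠ n ∧ f^[m] x = f^[n] x := by
    by_contra! h
    exact Set.infinite_range_of_injective (fun m n hmn => by_contra fun hne => h m n hne hmn) hfin
  rcases lt_or_gt_of_ne hne with hlt | hlt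
  · exact mk_mem_periodicPts (by lia) (iterate_cancel hf heq.symm)
  · exact mk_mem_periodicPts (by lia) (iterate_cancel hf heq)

theorem even_card_of_involutive_of_fixedPointFree {β : Type*} [Fintype β] {g : β → β}
    (hinv : Involutive g) (hfree : ∀ b, g b ≠ b) : Even (Fintype.card β) := by
  have : Fact (Nat.Prime 2) := ⟨Nat.prime_two⟩
  by_contra hodd
  obtain ⟨b, hb⟩ := Equiv.Perm.exists_fixed_point_of_prime (p := 2) (n := 1)
    (by rwa [even_iff_two_dvd] at hodd) (σ := hinv.toPerm g)
    (by ext b; simp [sq, hinv b])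
  exact hfree b hb

def returnTimes (f : α → α) (E : Set α) (a : α) : Set ℕ :=
  {t | 0 < t ∧ f^[t] a ∈ E}

theorem exists_isLeast_returnTimes {E : Set α} {a : α} (ha : a ∈ periodicPts f)
    (haE : a ∈ E) :
    ∃ m, IsLeast (returnTimes f E a) m := by
  obtain ⟨p, hp, hpa⟩ := mem_periodicPts.mp ha
  have hne : (returnTimes f E a).Nonempty := ⟨p, hp, hpa.eq.symm ▸ haE⟩
  exact ⟨sInf (returnTimes f E a), Nat.sInf_mem hne, fun t ht => Nat.sInf_le ht⟩

theorem iterate_reverse_iterate (hrev : ∀ s, f (R (f s)) = R s) (k : ℕ) (s : α) :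
    f^[k] (R (f^[k] s)) = R s := by
  induction k generalizing s with
  | zero => rfl
  | succ k ih => rw [iterate_succ_apply, iterate_succ_apply', hrev, ih]

theorem isLeast_returnTimes_reverse (hrev : ∀ s, f (R (f s)) = R s) (hR : Involutive R)
    {E : Set α} (hE : ∀ s ∈ E, R s ∈ E) {a : α} {m : ℕ} (haE : a ∈ E)
    (hm : IsLeast (returnTimes f E a) m) :
    IsLeast (returnTimes f E (R (f^[m] a))) m ∧ f^[m] (R (f^[m] a)) = R a := by
  have hback := iterate_reverse_iterate hrev m a
  refine ⟨⟨⟨hm.1.1, hback ▸ hE a haE⟩, fun t ⟨htpos, htE⟩ => ?_⟩, hback⟩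
  by_contra! htm
  have hsplit : f^[t] (R (f^[m] a)) = R (f^[m - t] a) := by
    rw [← iterate_reverse_iterate hrev t (f^[m - t] a), ← iterate_add_apply,
      Nat.add_sub_cancel' htm.le]
  have : m - t ∈ returnTimes f E a := ⟨by lia, hR (f^[m - t] a) ▸ hE _ (hsplit ▸ htE)⟩
  have := hm.2 this
  lia

theorem exists_reverse_eq_or_of_iterate_eq_reverse (hrev : ∀ s, f (R (f s)) = R s)
    (hf : Injective f) {a : α} {m : ℕ} (h : f^[m] a = R a) :
    ∃ k, R (f^[k] a) = f^[k] a ∨ f (f^[k] a) = R (f^[k] a) := by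
  obtain ⟨j, rfl | rfl⟩ := Nat.even_or_odd' m
  · refine ⟨j, Or.inl (hf.iterate j ?_)⟩
    rw [iterate_reverse_iterate hrev, ← h, two_mul, iterate_add_apply]
  · refine ⟨j, Or.inr (hf.iterate j ?_).symm⟩
    rw [iterate_reverse_iterate hrev, ← h, ← iterate_succ_apply' f j, ← iterate_add_apply]
    congr 1; lia

end Reversible

namespace LorentzMirror

def axisDirs : Set (ℤ × ℤ) := {(1, 0), (-1, 0), (0, 1), (0, -1)}

theorem reflect_reflect (m : Mirror) (d : ℤ × ℤ) : reflect m (reflect m d) = d := by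
  rcases m with _ | _ | _ <;> simp [reflect]

theorem reflect_neg (m : Mirror) (d : ℤ × ℤ) : reflect m (-d) = -reflect m d := by
  rcases m with _ | _ | _ <;> rfl

theorem reflect_mem_axisDirs (m : Mirror) {d : ℤ × ℤ} (hd : d ∈ axisDirs) :
    reflect m d ∈ axisDirs := by
  rcases m with _ | _ | _ <;> rcases hd with rfl | rfl | rfl | rfl <;> simp [reflect, axisDirs]

theorem reflect_ne_neg (m : Mirror) {d : ℤ × ℤ} (hd : d ∈ axisDirs) :
    reflect m d ≠ -d := by
  rcases m with _ | _ | _ <;> rcases hd with rfl | rfl | rfl | rfl <;> decide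

abbrev State (w : ℕ) := (ℤ × ZMod w) × (ℤ × ℤ)

variable {w : ℕ} (cfg : ℤ × ZMod w → Mirror)

/-- The same edge traversed backwards: stand at the vertex the ray is heading to and turn around. -/
def reverse (s : State w) : State w :=
  ((s.1.1 + s.2.1, s.1.2 + (s.2.2 : ZMod w)), -s.2)

theorem reverse_involutive : Involutive (reverse (w := w)) := by
  rintro ⟨⟨x, y⟩, d⟩
  simp [reverse]

theorem stepC_reverse_stepC (s : State w) : stepC w cfg (reverse (stepC w cfg s)) = reverse s := by
  obtain ⟨⟨x, y⟩, d⟩ := s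
  simp [stepC, reverse, reflect_neg, reflect_reflect]

theorem stepC_injective : Injective (stepC w cfg) := by
  refine LeftInverse.injective (g := fun t => reverse (stepC w cfg (reverse t))) fun s => ?_
  simp only [stepC_reverse_stepC, reverse_involutive s]

theorem neg_ne_self_of_mem_axisDirs {d : ℤ × ℤ} (hd : d ∈ axisDirs) : -d ≠ d := by
  rcases hd with rfl | rfl | rfl | rfl <;> decide

theorem reverse_ne_self {s : State w} (hs : s.2 ∈ axisDirs) : reverse s ≠ s :=
  fun h => neg_ne_self_of_mem_axisDirs hs (congrArg Prod.snd h)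

theorem stepC_ne_reverse {s : State w} (hs : s.2 ∈ axisDirs) : stepC w cfg s ≠ reverse s :=
  fun h => reflect_ne_neg _ hs (congrArg Prod.snd h)

theorem iterate_stepC_snd_mem_axisDirs {s : State w} (hs : s.2 ∈ axisDirs) (k : ℕ) :
    ((stepC w cfg)^[k] s).2 ∈ axisDirs := by
  induction k with
  | zero => exact hs
  | succ k ih =>
    rw [iterate_succ_apply']
    exact reflect_mem_axisDirs _ ih

theorem mem_periodicPts_of_bounded [NeZero w] {s : State w} (hs : s.2 ∈ axisDirs) {M : ℤ}
    (hM : ∀ k, |((stepC w cfg)^[k] s).1.1| ≤ M) : s ∈ periodicPts (stepC w cfg) := by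
  have hdirs : axisDirs.Finite := by simp [axisDirs]
  refine (stepC_injective cfg).mem_periodicPts_of_finite_orbit <|
    (((Set.finite_Icc (-M) M).prod Set.finite_univ).prod hdirs).subset ?_
  rintro _ ⟨k, rfl⟩
  exact ⟨⟨abs_le.mp (hM k), trivial⟩, iterate_stepC_snd_mem_axisDirs cfg hs k⟩

def rightCross (y : ZMod w) : State w := ((0, y), (1, 0))

def leftCross (y : ZMod w) : State w := ((1, y), (-1, 0))

/-- The two directed versions of the `w` edges between the columns `x = 0` and `x = 1`. -/
def cut (w : ℕ) : Set (State w) := Set.range rightCross ∪ Set.range leftCross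

theorem rightCross_mem_cut (y : ZMod w) : rightCross y ∈ cut w := Or.inl ⟨y, rfl⟩

theorem leftCross_injective : Injective (leftCross (w := w)) := by
  intro y y' h
  simpa [leftCross] using h

theorem reverse_rightCross (y : ZMod w) : reverse (rightCross y) = leftCross y := by
  simp [reverse, rightCross, leftCross]

theorem reverse_leftCross (y : ZMod w) : reverse (leftCross y) = rightCross y := by
  simp [reverse, rightCross, leftCross]

theorem reverse_mem_cut {s : State w} (hs : s ∈ cut w) : reverse s ∈ cut w := by
  rcases hs with ⟨y, rfl⟩ | ⟨y, rfl⟩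
  · exact Or.inr ⟨y, (reverse_rightCross y).symm⟩
  · exact Or.inl ⟨y, (reverse_leftCross y).symm⟩

theorem one_le_fst_stepC {s : State w} (hx : 1 ≤ s.1.1) (hd : s.2 ∈ axisDirs)
    (hs : s ∉ Set.range leftCross) : 1 ≤ (stepC w cfg s).1.1 := by
  obtain ⟨⟨x, y⟩, d⟩ := s
  change 1 ≤ x at hx
  change 1 ≤ x + d.1
  rcases hd with rfl | rfl | rfl | rfl <;> dsimp only
  case inr.inl =>
    have hx1 : x ≠ 1 := by
      rintro rfl
      exact hs ⟨y, rfl⟩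
    lia
  all_goals lia

/-- Between two visits of the cut a ray stays on one side of it. -/
theorem exists_iterate_eq_leftCross {y : ZMod w} {m : ℕ}
    (hm : IsLeast (returnTimes (stepC w cfg) (cut w) (rightCross y)) m) :
    ∃ y', (stepC w cfg)^[m] (rightCross y) = leftCross y' := by
  have hx : ∀ t, 0 < t → t ≤ m → 1 ≤ ((stepC w cfg)^[t] (rightCross y)).1.1 := by
    intro t
    induction t with
    | zero => intro h; cases h
    | succ t ih =>
      intro _ htm
      rw [iterate_succ_apply']
      rcases Nat.eq_zero_or_pos t with rfl | ht
      · exact le_rfl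
      · refine one_le_fst_stepC cfg (ih ht (by lia))
          (iterate_stepC_snd_mem_axisDirs cfg (by simp [rightCross, axisDirs]) t) fun hmem => ?_
        have := hm.2 ⟨ht, Or.inr hmem⟩
        lia
  obtain ⟨-, ⟨y', hy'⟩ | ⟨y', hy'⟩⟩ := hm.1
  · have := hx m hm.1.1 le_rfl
    rw [← hy'] at this
    simp [rightCross] at this
  · exact ⟨y', hy'.symm⟩

theorem even_of_forall_bounded [NeZero w]
    (hbdd : ∀ s : State w, s.2 ∈ axisDirs →
      ∃ M : ℤ, ∀ k, |((stepC w cfg)^[k] s).1.1| ≤ M) :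
    Even w := by
  have hrev := stepC_reverse_stepC cfg
  have hright : ∀ y : ZMod w, (rightCross y).2 ∈ axisDirs := fun y => by
    simp [rightCross, axisDirs]
  have hret : ∀ y, ∃ m, IsLeast (returnTimes (stepC w cfg) (cut w) (rightCross y)) m := by
    intro y
    obtain ⟨M, hM⟩ := hbdd _ (hright y)
    exact exists_isLeast_returnTimes (mem_periodicPts_of_bounded cfg (hright y) hM)
      (rightCross_mem_cut y)
  choose m hm using hret
  choose g hg using fun y => exists_iterate_eq_leftCross cfg (hm y)
  have hinv : Involutive g := by
    intro y
    obtain ⟨hm', hback⟩ := isLeast_returnTimes_reverse hrev reverse_involutive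
      (fun _ => reverse_mem_cut) (rightCross_mem_cut y) (hm y)
    rw [hg y, reverse_leftCross] at hm'
    rw [hg y, reverse_leftCross, reverse_rightCross] at hback
    rw [hm'.unique (hm (g y)), hg (g y)] at hback
    exact leftCross_injective hback
  have hfree : ∀ y, g y ≠ y := by
    intro y hy
    have hloop := hg y
    rw [hy, ← reverse_rightCross] at hloop
    obtain ⟨k, hk | hk⟩ := exists_reverse_eq_or_of_iterate_eq_reverse hrev
      (stepC_injective cfg) hloop
    · exact reverse_ne_self (iterate_stepC_snd_mem_axisDirs cfg (hright y) k) hk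
    · exact stepC_ne_reverse cfg (iterate_stepC_snd_mem_axisDirs cfg (hright y) k) hk
  simpa [ZMod.card] using even_card_of_involutive_of_fixedPointFree hinv hfree

end LorentzMirror

/-- **Odd-width cylinders carry an infinite trajectory.** On the cylinder
`ℤ × (ℤ/(2n+1)ℤ)` of odd width, for any mirror configuration of the Lorentz mirror
model there is an initial state (a vertex together with a unit direction) whose
light trajectory is unbounded. -/
theorem stmt5 (n : ℕ) (cfg : ℤ × ZMod (2*n+1) → Mirror) :
    ∃ s : (ℤ × ZMod (2*n+1)) × (ℤ × ℤ),
      (s.2 = (1, 0) ∨ s.2 = (-1, 0) ∨ s.2 = (0, 1) ∨ s.2 = (0, -1)) ∧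
      ∀ M : ℕ, ∃ k : ℕ, (M : ℤ) < |((stepC (2*n+1) cfg)^[k] s).1.1| := by
  by_contra! hbdd
  refine Nat.not_even_two_mul_add_one n (LorentzMirror.even_of_forall_bounded cfg fun s hs => ?_)
  obtain ⟨M, hM⟩ := hbdd s hs
  exact ⟨M, hM⟩
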